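/- arXiv:1207.1024 — 3 statements merged into one kernel-verified Lean document; each statement's English description precedes it below -/
import Mathlib

section
/- For every finite subset A of M, cov(A) ≤ (1 + log|A|) · max_{x,y ∈ A} E_x T(y). -/
open MeasureTheory ENNReal NNReal

namespace CoverTime

noncomputable section

/-- A (time-homogeneous) Markov chain on a state space `M`, described by the family of
laws `P x` of the trajectory `(X_n)_{n ≥ 0}` started at `x`, on the path space `ℕ → M`,
together with its transition kernel `K`. -/
structure Chain (M : Type*) [MeasurableSpace M] where
  P : M → Measure (ℕ → M)
  prob : ∀ x, IsProbabilityMeasure (P x)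
  K : M → M → ℝ≥0∞
  K_row : ∀ x, ∑' y, K x y = 1
  start : ∀ x, P x {ω | ω 0 = x} = 1
  markov : ∀ (x : M) (path : ℕ → M) (n : ℕ),
    P x {ω | ∀ i ≤ n + 1, ω i = path i}
      = P x {ω | ∀ i ≤ n, ω i = path i} * K (path n) (path (n + 1))

variable {M : Type*}

/-- Hitting time `T(A) = inf {n ≥ 0 : X_n ∈ A}` of a set `A`, with value `∞` if `A` is
never hit. -/
def hitTime (A : Set M) (ω : ℕ → M) : ℝ≥0∞ :=
  ⨅ n ∈ {n : ℕ | ω n ∈ A}, (n : ℝ≥0∞)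

/-- The `k`-th return time `T^k(x)`: `T^0(x) = 0` and
`T^k(x) = inf {n ≥ T^{k-1}(x) + 1 : X_n = x}`. -/
def retTime (x : M) : ℕ → (ℕ → M) → ℝ≥0∞
  | 0 => fun _ => 0
  | k + 1 => fun ω => ⨅ n ∈ {n : ℕ | retTime x k ω < (n : ℝ≥0∞) ∧ ω n = x}, (n : ℝ≥0∞)

/-- Number of visits to `y` (strictly) before time `t`, i.e. `N_t(y)`. -/
def visits (y : M) (t : ℝ≥0∞) (ω : ℕ → M) : ℝ≥0∞ :=
  ∑' n : ℕ, Set.indicator {n : ℕ | (n : ℝ≥0∞) < t ∧ ω n = y} (fun _ => (1 : ℝ≥0∞)) n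

variable [MeasurableSpace M]

/-- Expectation `E_x f` of a nonnegative path functional under `P_x`. -/
def E (c : Chain M) (x : M) (f : (ℕ → M) → ℝ≥0∞) : ℝ≥0∞ :=
  ∫⁻ ω, f ω ∂(c.P x)

/-- The expected hitting time `E_x T(y)`. -/
def eHit (c : Chain M) (x y : M) : ℝ≥0∞ := E c x (hitTime {y})

/-- The commute distance `d(x,y) = E_x T(y) + E_y T(x)`. -/
def commuteDist (c : Chain M) (x y : M) : ℝ≥0∞ := eHit c x y + eHit c y x

/-- `T_cov(A) = sup_{x ∈ A} T(x)`, the first time every point of `A` has been visited. -/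
def coverTime (A : Set M) (ω : ℕ → M) : ℝ≥0∞ := ⨆ x ∈ A, hitTime {x} ω

/-- The cover time `cov(A) = sup_{x ∈ A} E_x T_cov(A)`. -/
def cov (c : Chain M) (A : Set M) : ℝ≥0∞ := ⨆ x ∈ A, E c x (coverTime A)

/-- `cov_-(A) = min_{x ∈ A} E_x T_cov(A)`. -/
def covMinus (c : Chain M) (A : Set M) : ℝ≥0∞ := ⨅ x ∈ A, E c x (coverTime A)

/-- Irreducibility of the chain. -/
def Irreducible (c : Chain M) : Prop := ∀ x y : M, ∃ n : ℕ, 0 < c.P x {ω | ω n = y}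

/-- Positive recurrence: every state has finite expected return time. -/
def PositiveRecurrent (c : Chain M) : Prop := ∀ x : M, E c x (retTime x 1) < ∞

/-- `π` is an invariant probability measure for the chain. -/
def Invariant (c : Chain M) (π : M → ℝ≥0∞) : Prop :=
  (∑' x, π x = 1) ∧ ∀ y, ∑' x, π x * c.K x y = π y

/-- Reversibility with respect to `π`: `π(x) P(x,y) = π(y) P(y,x)`. -/
def Reversible (c : Chain M) (π : M → ℝ≥0∞) : Prop :=
  ∀ x y, π x * c.K x y = π y * c.K y x

/-- Diameter of a set with respect to an `ℝ≥0∞`-valued distance. -/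
def setDiam (d : M → M → ℝ≥0∞) (B : Set M) : ℝ≥0∞ := ⨆ x ∈ B, ⨆ y ∈ B, d x y

/-- The sequence `N_0 = 1`, `N_n = 2^(2^n)` for `n ≥ 1`. -/
def Nseq : ℕ → ℕ
  | 0 => 1
  | n + 1 => 2 ^ 2 ^ (n + 1)

/-- An admissible sequence of partitions of `A`: `𝒜_{n+1}` refines `𝒜_n` and
`|𝒜_n| ≤ N_n` for every `n`.  The partition `𝒜_n` is encoded by the map
`cell n` sending `x ∈ A` to the element `A_n(x)` of `𝒜_n` containing it. -/
structure AdmissibleSeq {M : Type*} (A : Set M) where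
  cell : ℕ → M → Set M
  self_mem : ∀ n, ∀ x ∈ A, x ∈ cell n x
  cell_subset : ∀ n, ∀ x ∈ A, cell n x ⊆ A
  compatible : ∀ n, ∀ x ∈ A, ∀ y ∈ A, cell n x = cell n y ∨ Disjoint (cell n x) (cell n y)
  refines : ∀ n, ∀ x ∈ A, cell (n + 1) x ⊆ cell n x
  finite : ∀ n, {B : Set M | ∃ x ∈ A, B = cell n x}.Finite
  card_le : ∀ n, {B : Set M | ∃ x ∈ A, B = cell n x}.ncard ≤ Nseq n

/-- Talagrand's functional `γ₂(A, d) = inf sup_x Σ_n 2^{n/2} Δ(A_n(x), d)`, the infimum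
running over admissible sequences of partitions of `A`. -/
def gamma2 {M : Type*} (d : M → M → ℝ≥0∞) (A : Set M) : ℝ≥0∞ :=
  ⨅ 𝒜 : AdmissibleSeq A, ⨆ x ∈ A,
    ∑' n : ℕ, (2 : ℝ≥0∞) ^ ((n : ℝ) / 2) * setDiam d (𝒜.cell n x)

/-- Talagrand's functional `γ₁(A, d) = inf sup_x Σ_n 2^n Δ(A_n(x), d)`. -/
def gamma1 {M : Type*} (d : M → M → ℝ≥0∞) (A : Set M) : ℝ≥0∞ :=
  ⨅ 𝒜 : AdmissibleSeq A, ⨆ x ∈ A,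
    ∑' n : ℕ, (2 : ℝ≥0∞) ^ n * setDiam d (𝒜.cell n x)

/-- Talagrand's growth condition for a set functional `F`, with parameters `r` and `τ`. -/
def GrowthCondition {M : Type*} (d : M → M → ℝ≥0∞) (F : Set M → ℝ≥0∞)
    (r : ℝ≥0∞) (τ : ℕ) : Prop :=
  ∀ (n : ℕ) (a : ℝ≥0∞), 0 < a →
    ∀ H : Fin (Nseq (n + τ)) → Set M,
      (∀ i, (H i).Nonempty) →
      setDiam d (⋃ i, H i) ≤ r * a →
      (∀ i j, i ≠ j → ∀ x ∈ H i, ∀ y ∈ H j, a ≤ d x y) →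
      (∀ i, setDiam d (H i) ≤ a / r) →
      a * 2 ^ n + ⨅ i, F (H i) ≤ F (⋃ i, H i)

/-!
Matthews' argument. Let `t` bound `E_z T(u)` for all relevant `z` and `u`. For `s ∈ F`, covering
`F` costs the cover time of `F \ {s}` plus, on the event that `s` is the last point of `F` to be
visited, the time to go on to `s`; by the strong Markov property at the cover time of `F \ {s}`,
the latter has mean at most `t · P(s is last)`. These events are disjoint as `s` ranges over
`F`, so `|F| · E T_cov(F) ≤ ∑_s E T_cov(F \ {s}) + t`, and induction on `|F|` gives
`E T_cov(F) ≤ H_{|F|} · t ≤ (1 + log |F|) · t`.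

A `Chain` postulates the Markov property only on cylinders, which need not be measurable and are
weighed by outer measure. Irreducibility forces the singletons of the countable state space to be
measurable, and then every path event used above is measurable.
-/

section Paths

omit [MeasurableSpace M]

variable {A : Set M} {ω ω' : ℕ → M} {k m N : ℕ}

lemma exists_hitTime_eq (A : Set M) (ω : ℕ → M) : ∃ v : ℕ∞, hitTime A ω = v :=
  ⟨⨅ n ∈ {n : ℕ | ω n ∈ A}, (n : ℕ∞), by simp [hitTime]⟩

lemma exists_coverTime_eq (A : Set M) (ω : ℕ → M) : ∃ v : ℕ∞, coverTime A ω = v :=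
  ⟨⨆ x ∈ A, ⨅ n ∈ {n : ℕ | ω n = x}, (n : ℕ∞), by simp [coverTime, hitTime]⟩

lemma hitTime_le_natCast_iff : hitTime A ω ≤ k ↔ ∃ i ≤ k, ω i ∈ A := by
  refine ⟨fun h => ?_, fun ⟨i, hi, hiA⟩ => (iInf₂_le i hiA).trans (by exact_mod_cast hi)⟩
  by_contra! hnot
  have : ((k + 1 : ℕ) : ℝ≥0∞) ≤ hitTime A ω :=
    le_iInf₂ fun n (hn : ω n ∈ A) => by
      exact_mod_cast (show k + 1 ≤ n by by_contra! h'; exact hnot n (by omega) hn)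
  have := this.trans h
  norm_cast at this
  omega

lemma natCast_lt_hitTime_iff : (k : ℝ≥0∞) < hitTime A ω ↔ ∀ i ≤ k, ω i ∉ A := by
  rw [← not_le, hitTime_le_natCast_iff]
  simp only [not_exists, not_and]

lemma hitTime_eq_natCast_iff : hitTime A ω = N ↔ ω N ∈ A ∧ ∀ i < N, ω i ∉ A := by
  constructor
  · intro h
    have hlt (i : ℕ) (hi : i < N) : ω i ∉ A := fun hiA =>
      absurd (h ▸ hitTime_le_natCast_iff.mpr ⟨i, le_rfl, hiA⟩) (by exact_mod_cast hi.not_ge)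
    obtain ⟨i, hi, hiA⟩ := hitTime_le_natCast_iff.mp h.le
    obtain rfl : i = N := by by_contra hne; exact hlt i (by omega) hiA
    exact ⟨hiA, hlt⟩
  · rintro ⟨hN, hlt⟩
    refine le_antisymm (iInf₂_le N hN) (le_iInf₂ fun n (hn : ω n ∈ A) => ?_)
    exact_mod_cast (show N ≤ n by by_contra! h; exact hlt n h hn)

lemma hitTime_eq_of_eqOn (h : ∀ i ≤ m, ω i = ω' i) (hle : hitTime A ω ≤ m) :
    hitTime A ω' = hitTime A ω := by
  obtain ⟨v, hv⟩ := exists_hitTime_eq A ω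
  induction v using ENat.recTopCoe with
  | top => simp [hv] at hle
  | coe N =>
    have hNm : N ≤ m := by simpa [hv] using hle
    rw [ENat.toENNReal_coe] at hv
    obtain ⟨hN, hlt⟩ := hitTime_eq_natCast_iff.mp hv
    rw [hv, hitTime_eq_natCast_iff]
    exact ⟨h N hNm ▸ hN, fun i hi => h i (by omega) ▸ hlt i hi⟩

lemma coverTime_eq_of_eqOn (h : ∀ i ≤ m, ω i = ω' i) (hle : coverTime A ω ≤ m) :
    coverTime A ω' = coverTime A ω :=
  iSup_congr fun _ => iSup_congr fun hx =>
    hitTime_eq_of_eqOn h ((le_biSup (fun y => hitTime {y} ω) hx).trans hle)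

lemma coverTime_insert (s : M) (A : Set M) (ω : ℕ → M) :
    coverTime (insert s A) ω = hitTime {s} ω ⊔ coverTime A ω :=
  iSup_insert

lemma coord_mem_of_coverTime_eq (hA : A.Finite) (hne : A.Nonempty) (h : coverTime A ω = m) :
    ω m ∈ A := by
  obtain ⟨x, hx, hmax⟩ := Set.exists_max_image A (fun x => hitTime {x} ω) hA hne
  have hx_eq : hitTime {x} ω = m :=
    le_antisymm (h ▸ le_biSup (fun y => hitTime {y} ω) hx) (h ▸ iSup₂_le hmax)
  exact (hitTime_eq_natCast_iff.mp hx_eq).1 ▸ hx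

def cylinder (n : ℕ) (p : ℕ → M) : Set (ℕ → M) := {ω | ∀ i ≤ n, ω i = p i}

def avoids (s : M) (m k : ℕ) : Set (ℕ → M) := {ω | ∀ i ≤ k, ω (m + i) ≠ s}

def extendWord {m : ℕ} (v : Fin (m + 1) → M) : ℕ → M := fun i => v ⟨min i m, by omega⟩

lemma cylinder_update_eq {m j : ℕ} (hj : m < j) (p : ℕ → M) (z : M) :
    cylinder m (Function.update p j z) = cylinder m p := by
  ext ω
  refine forall_congr' fun i => imp_congr_right fun hi => ?_
  rw [Function.update_of_ne (by omega)]

lemma cylinder_inter_avoids_succ {s : M} {m : ℕ} {p : ℕ → M} (hpm : p m ≠ s) (k : ℕ) :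
    cylinder m p ∩ avoids s m (k + 1) =
      ⋃ z : ({s}ᶜ : Set M),
        cylinder (m + 1) (Function.update p (m + 1) z) ∩ avoids s (m + 1) k := by
  ext ω
  simp only [cylinder, avoids, Set.mem_inter_iff, Set.mem_iUnion, Set.mem_ofPred_eq]
  constructor
  · rintro ⟨hcyl, hav⟩
    refine ⟨⟨ω (m + 1), by simpa using hav 1 (by omega)⟩, fun i hi => ?_, fun i hi => ?_⟩
    · rcases eq_or_ne i (m + 1) with rfl | hne
      · simp
      · rw [Function.update_of_ne hne]; exact hcyl i (by omega)
    · simpa only [show m + 1 + i = m + (1 + i) by omega] using hav (1 + i) (by omega)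
  · rintro ⟨z, hcyl, hav⟩
    have hcyl' : ∀ i ≤ m, ω i = p i := fun i hi => by
      simpa [Function.update_of_ne (show i ≠ m + 1 by omega)] using hcyl i (by omega)
    refine ⟨hcyl', fun i hi => ?_⟩
    rcases i with _ | i
    · simpa [hcyl' m le_rfl] using hpm
    · simpa only [show m + (i + 1) = m + 1 + i by omega] using hav i (by omega)

lemma pairwise_disjoint_cylinder_update (m : ℕ) (p : ℕ → M) :
    Pairwise fun z z' : M => Disjoint (cylinder (m + 1) (Function.update p (m + 1) z))
      (cylinder (m + 1) (Function.update p (m + 1) z')) :=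
  fun z z' hne => Set.disjoint_left.mpr fun ω h h' =>
    hne <| by simpa using (h (m + 1) le_rfl).symm.trans (h' (m + 1) le_rfl)

lemma extendWord_restrict (ω : ℕ → M) {i : ℕ} (hi : i ≤ m) :
    extendWord (fun j : Fin (m + 1) => ω j) i = ω i := by
  simp [extendWord, Nat.min_eq_left hi]

lemma eq_iUnion_cylinder_of_dependsOn {B : Set (ℕ → M)} (hB : DependsOn (· ∈ B) (Set.Iic m)) :
    B = ⋃ v : {v : Fin (m + 1) → M // extendWord v ∈ B}, cylinder m (extendWord v.1) := by
  ext ω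
  simp only [Set.mem_iUnion, Subtype.exists, exists_prop]
  constructor
  · intro hω
    have hagree : ∀ i ≤ m, extendWord (fun j : Fin (m + 1) => ω j) i = ω i :=
      fun i hi => extendWord_restrict ω hi
    exact ⟨_, (hB fun i hi => (hagree i hi).symm).mp hω, fun i hi => (hagree i hi).symm⟩
  · rintro ⟨v, hv, hω⟩
    exact (hB fun i hi => (hω i hi).symm).mp hv

lemma pairwise_disjoint_cylinder_extendWord (m : ℕ) :
    Pairwise fun v v' : Fin (m + 1) → M =>
      Disjoint (cylinder m (extendWord v)) (cylinder m (extendWord v')) :=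
  fun v v' hne => Set.disjoint_left.mpr fun ω h h' => hne <| funext fun j => by
    simpa [extendWord, Nat.min_eq_left (Nat.lt_succ_iff.mp j.2)] using
      (h j (Nat.lt_succ_iff.mp j.2)).symm.trans (h' j (Nat.lt_succ_iff.mp j.2))

lemma natCast_lt_hitTime_singleton_iff {s : M} :
    (k : ℝ≥0∞) < hitTime {s} ω ↔ ω ∈ avoids s 0 k := by
  simp [natCast_lt_hitTime_iff, avoids]

lemma natCast_add_lt_hitTime_singleton_iff {s : M} {j : ℕ} :
    ((m + j : ℕ) : ℝ≥0∞) < hitTime {s} ω ↔ (m : ℝ≥0∞) < hitTime {s} ω ∧ ω ∈ avoids s m j := by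
  simp only [natCast_lt_hitTime_iff, avoids, Set.mem_singleton_iff, Set.mem_ofPred_eq]
  refine ⟨fun h => ⟨fun i hi => h i (by omega), fun i hi => h (m + i) (by omega)⟩,
    fun ⟨h₁, h₂⟩ i hi => ?_⟩
  rcases le_or_gt i m with him | him
  · exact h₁ i him
  · simpa [show m + (i - m) = i by omega] using h₂ (i - m) (by omega)

lemma setOf_coverTime_eq_and_natCast_add_lt_hitTime (A : Set M) (s : M) (m j : ℕ) :
    {ω | coverTime A ω = m ∧ ((m + j : ℕ) : ℝ≥0∞) < hitTime {s} ω} =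
      {ω | coverTime A ω = m ∧ (m : ℝ≥0∞) < hitTime {s} ω} ∩ avoids s m j := by
  ext ω
  simp only [natCast_add_lt_hitTime_singleton_iff, Set.mem_inter_iff, Set.mem_ofPred_eq, and_assoc]

lemma eq_iUnion_inter_coord_eq (hA : A.Finite) (hne : A.Nonempty) {S : Set (ℕ → M)}
    (hS : S ⊆ {ω | coverTime A ω = m}) : S = ⋃ z : A, S ∩ {ω | ω m = z} := by
  refine Set.Subset.antisymm (fun ω hω => ?_) (Set.iUnion_subset fun _ => Set.inter_subset_left)
  exact Set.mem_iUnion.mpr ⟨⟨ω m, coord_mem_of_coverTime_eq hA hne (hS hω)⟩, hω, rfl⟩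

lemma dependsOn_coverTime_eq_lt_hitTime_coord_eq (A : Set M) (s z : M) (m : ℕ) :
    DependsOn (· ∈ {ω | coverTime A ω = m ∧ (m : ℝ≥0∞) < hitTime {s} ω} ∩ {ω | ω m = z})
      (Set.Iic m) := by
  intro ω ω' h
  replace h : ∀ i ≤ m, ω i = ω' i := fun i hi => h i hi
  have hcov {ω ω' : ℕ → M} (h : ∀ i ≤ m, ω i = ω' i) (hω : coverTime A ω = m) :
      coverTime A ω' = m := (coverTime_eq_of_eqOn h hω.le).trans hω
  have hhit : (m : ℝ≥0∞) < hitTime {s} ω ↔ (m : ℝ≥0∞) < hitTime {s} ω' := by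
    simp only [natCast_lt_hitTime_iff]
    exact forall₂_congr fun i hi => by rw [h i hi]
  simp only [Set.mem_inter_iff, Set.mem_ofPred_eq, eq_iff_iff]
  exact and_congr (and_congr ⟨hcov h, hcov fun i hi => (h i hi).symm⟩ hhit)
    (by rw [h m le_rfl])

lemma disjoint_coverTime_lt_hitTime {B B' : Set M} {s s' : M} (hs' : s' ∈ B) (hs : s ∈ B') :
    Disjoint {ω | coverTime B ω < hitTime {s} ω} {ω | coverTime B' ω < hitTime {s'} ω} :=
  Set.disjoint_left.mpr fun ω h h' =>
    (((le_biSup (fun y => hitTime {y} ω) hs').trans_lt h).trans_le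
      (le_biSup (fun y => hitTime {y} ω) hs)).trans h' |>.false

end Paths

section NatValued

variable {Ω : Type*} [MeasurableSpace Ω]

lemma tsum_ite_natCast_lt (v : ℕ∞) :
    ∑' k : ℕ, (if (k : ℝ≥0∞) < v then 1 else 0) = (v : ℝ≥0∞) := by
  induction v using ENat.recTopCoe with
  | top => simp
  | coe n =>
    rw [tsum_eq_sum (s := Finset.range n) fun k hk => by simpa using hk]
    simp [Finset.filter_true_of_mem fun k hk => Finset.mem_range.mp hk]

lemma lintegral_eq_tsum_measure_natCast_lt (μ : Measure Ω) {f : Ω → ℝ≥0∞} (hf : Measurable f)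
    (hnat : ∀ ω, ∃ v : ℕ∞, f ω = v) :
    ∫⁻ ω, f ω ∂μ = ∑' k : ℕ, μ {ω | (k : ℝ≥0∞) < f ω} := by
  have hmeas (k : ℕ) : MeasurableSet {ω | (k : ℝ≥0∞) < f ω} := measurableSet_lt measurable_const hf
  have hsum (ω : Ω) : f ω = ∑' k : ℕ, {ω | (k : ℝ≥0∞) < f ω}.indicator 1 ω := by
    obtain ⟨v, hv⟩ := hnat ω
    simp only [Set.indicator_apply, Set.mem_ofPred_eq, Pi.one_apply, hv]
    exact (tsum_ite_natCast_lt v).symm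
  rw [lintegral_congr hsum,
    lintegral_tsum fun k => (measurable_one.indicator (hmeas k)).aemeasurable]
  exact tsum_congr fun k => lintegral_indicator_one (hmeas k)

lemma measure_eq_tsum_measure_inter_eq_natCast (μ : Measure Ω) {f : Ω → ℝ≥0∞}
    (hf : Measurable f) (hnat : ∀ ω, ∃ v : ℕ∞, f ω = v) {S : Set Ω} (hS : MeasurableSet S)
    (hfin : ∀ ω ∈ S, f ω ≠ ⊤) :
    μ S = ∑' m : ℕ, μ (S ∩ {ω | f ω = m}) := by
  have hunion : S = ⋃ m : ℕ, S ∩ {ω | f ω = m} := by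
    refine Set.Subset.antisymm (fun ω hω => ?_) (Set.iUnion_subset fun m => Set.inter_subset_left)
    obtain ⟨v, hv⟩ := hnat ω
    induction v using ENat.recTopCoe with
    | top => exact absurd hv (hfin ω hω)
    | coe n => exact Set.mem_iUnion.mpr ⟨n, hω, by simpa using hv⟩
  conv_lhs => rw [hunion]
  refine measure_iUnion (fun m n hmn => ?_) fun m =>
    hS.inter (measurableSet_eq_fun hf measurable_const)
  refine Set.disjoint_left.mpr fun ω ⟨_, hm⟩ ⟨_, hn⟩ => hmn ?_
  exact_mod_cast (hm.symm.trans hn : (m : ℝ≥0∞) = n)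

lemma tsum_eq_tsum_add_of_forall_lt_eq_zero {α : Type*} [AddCommMonoid α] [TopologicalSpace α]
    {g : ℕ → α} {m : ℕ} (hg : ∀ k < m, g k = 0) : ∑' k, g k = ∑' j, g (m + j) := by
  refine ((add_right_injective m).tsum_eq fun k hk => ⟨k - m, ?_⟩).symm
  have : m ≤ k := by by_contra! h; exact hk (hg k h)
  show m + (k - m) = k
  omega

lemma tsum_measure_le_lt_inter_eq (μ : Measure Ω) (f g : Ω → ℝ≥0∞) (m : ℕ) :
    ∑' k : ℕ, μ ({ω | f ω ≤ k ∧ (k : ℝ≥0∞) < g ω} ∩ {ω | f ω = m})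
      = ∑' j : ℕ, μ {ω | f ω = m ∧ ((m + j : ℕ) : ℝ≥0∞) < g ω} := by
  have hbefore : ∀ k < m, μ ({ω | f ω ≤ k ∧ (k : ℝ≥0∞) < g ω} ∩ {ω | f ω = m}) = 0 :=
    fun k hk => measure_mono_null
      (fun ω ⟨⟨hle, _⟩, hm⟩ => hk.not_ge (by exact_mod_cast hm ▸ hle)) measure_empty
  rw [tsum_eq_tsum_add_of_forall_lt_eq_zero hbefore]
  refine tsum_congr fun j => congrArg _ (Set.ext fun ω => ?_)
  simp only [Set.mem_inter_iff, Set.mem_ofPred_eq]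
  exact ⟨fun ⟨⟨_, hlt⟩, hm⟩ => ⟨hm, hlt⟩,
    fun ⟨hm, hlt⟩ => ⟨⟨hm ▸ by exact_mod_cast Nat.le_add_right m j, hlt⟩, hm⟩⟩

end NatValued

lemma le_ofReal_harmonic_succ_mul {n : ℕ} {e t : ℝ≥0∞}
    (h : ((n + 1 : ℕ) : ℝ≥0∞) * e ≤ (n + 1 : ℕ) * (ENNReal.ofReal (harmonic n) * t) + t) :
    e ≤ ENNReal.ofReal (harmonic (n + 1)) * t := by
  have hnonneg : (0 : ℝ) ≤ harmonic n :=
    Rat.cast_nonneg.mpr (Finset.sum_nonneg fun _ _ => by positivity)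
  have hpos : ((n + 1 : ℕ) : ℝ≥0∞) ≠ 0 := by exact_mod_cast n.succ_ne_zero
  rw [← ENNReal.mul_le_mul_iff_right hpos (ENNReal.natCast_ne_top _), harmonic_succ, Rat.cast_add,
    ENNReal.ofReal_add hnonneg (by positivity), Rat.cast_inv, Rat.cast_natCast,
    ENNReal.ofReal_inv_of_pos (by positivity), ENNReal.ofReal_natCast, add_mul, mul_add,
    ENNReal.mul_inv_cancel_left hpos (ENNReal.natCast_ne_top _)]
  exact h

lemma mem_of_measurableSet_of_mem_measurableAtom {T : Set (ℕ → M)} (hT : MeasurableSet T)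
    {ω ω' : ℕ → M} (hω' : ∀ i, ω' i ∈ measurableAtom (ω i)) (hω : ω ∈ T) : ω' ∈ T := by
  let saturated : MeasurableSpace (ℕ → M) :=
    { MeasurableSet' := fun T => ∀ ω ω' : ℕ → M, (∀ i, ω' i ∈ measurableAtom (ω i)) →
        ω ∈ T → ω' ∈ T
      measurableSet_empty := fun _ _ _ h => h
      measurableSet_compl := fun T hT ω ω' h hω hω' => hω <| hT ω' ω
        (fun i => measurableAtom_eq_of_mem (h i) ▸ mem_measurableAtom_self _) hω'
      measurableSet_iUnion := fun f hf ω ω' h hω => by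
        obtain ⟨i, hi⟩ := Set.mem_iUnion.mp hω
        exact Set.mem_iUnion.mpr ⟨i, hf i ω ω' h hi⟩ }
  have hle : MeasurableSpace.pi ≤ saturated := by
    refine iSup_le fun i S ⟨U, hU, hS⟩ ω ω' h hω => ?_
    subst hS
    exact mem_of_mem_measurableAtom (h i) hU hω
  exact hle T hT ω ω' hω' hω

namespace Chain

variable (c : Chain M)

lemma kernel_eq_measure_cylinder (y w : M) :
    c.K y w = c.P y (cylinder 1 fun i => if i = 0 then y else w) := by
  have hstart : cylinder 0 (fun i => if i = 0 then y else w) = {ω | ω 0 = y} := by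
    ext ω; simp [cylinder]
  rw [cylinder, c.markov, ← cylinder, hstart, c.start]
  simp

lemma measure_cylinder_update (x : M) (m : ℕ) (p : ℕ → M) (z : M) :
    c.P x (cylinder (m + 1) (Function.update p (m + 1) z)) =
      c.P x (cylinder m p) * c.K (p m) z := by
  have h := c.markov x (Function.update p (m + 1) z) m
  simp only [Function.update_self, Function.update_of_ne (show m ≠ m + 1 by omega)] at h
  rw [← cylinder_update_eq (show m < m + 1 by omega) p z]
  exact h

variable [Countable M]

lemma measure_compl_start_measurableAtom (x : M) : c.P x {ω | ω 0 ∈ measurableAtom x}ᶜ = 0 := by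
  have := c.prob x
  refine (prob_compl_eq_zero_iff
    (measurable_pi_apply 0 (MeasurableSet.measurableAtom_of_countable x))).mpr ?_
  exact le_antisymm prob_le_one <| c.start x ▸ measure_mono fun ω (h : ω 0 = x) =>
    h ▸ mem_measurableAtom_self (ω 0)

lemma measure_measurableAtom_le_kernel (y w : M) :
    c.P y {ω | ω 1 ∈ measurableAtom w} ≤ c.K y w := by
  set p : ℕ → M := fun i => if i = 0 then y else w
  have hsat : {ω | ω 0 ∈ measurableAtom y} ∩ {ω | ω 1 ∈ measurableAtom w}
      ⊆ toMeasurable (c.P y) (cylinder 1 p) := by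
    rintro ω' ⟨h0, h1⟩
    refine mem_of_measurableSet_of_mem_measurableAtom (measurableSet_toMeasurable _ _)
      (ω := fun i => if i ≤ 1 then p i else ω' i) (fun i => ?_)
      (subset_toMeasurable _ _ fun i hi => if_pos hi)
    rcases i with _ | _ | i
    · exact h0
    · exact h1
    · simp
  calc c.P y {ω | ω 1 ∈ measurableAtom w}
      = c.P y ({ω | ω 0 ∈ measurableAtom y} ∩ {ω | ω 1 ∈ measurableAtom w}) := by
        rw [Set.inter_comm, measure_inter_conull (c.measure_compl_start_measurableAtom y)]
    _ ≤ c.P y (cylinder 1 p) := (measure_mono hsat).trans (measure_toMeasurable _).le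
    _ = c.K y w := (c.kernel_eq_measure_cylinder y w).symm

/-- The atoms of the points other than `w` already carry the whole mass of the row `c.K y`. -/
lemma kernel_eq_zero_of_mem_measurableAtom {w w' : M} (hne : w' ≠ w)
    (hw' : w' ∈ measurableAtom w) (y : M) : c.K y w = 0 := by
  have := c.prob y
  have hcover : (Set.univ : Set (ℕ → M))
      ⊆ ⋃ u : ({w}ᶜ : Set M), {ω | ω 1 ∈ measurableAtom (u : M)} := by
    intro ω _
    by_cases hω : ω 1 = w
    · refine Set.mem_iUnion.mpr ⟨⟨w', hne⟩, ?_⟩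
      simp [hω, measurableAtom_eq_of_mem hw']
    · exact Set.mem_iUnion.mpr ⟨⟨ω 1, hω⟩, mem_measurableAtom_self _⟩
  have hrest : 1 ≤ ∑' u : ({w}ᶜ : Set M), c.K y u :=
    calc (1 : ℝ≥0∞) = c.P y Set.univ := measure_univ.symm
      _ ≤ ∑' u : ({w}ᶜ : Set M), c.P y {ω | ω 1 ∈ measurableAtom (u : M)} :=
        (measure_mono hcover).trans (measure_iUnion_le _)
      _ ≤ ∑' u : ({w}ᶜ : Set M), c.K y u :=
        ENNReal.tsum_le_tsum fun u => c.measure_measurableAtom_le_kernel y u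
  have hsplit := ENNReal.summable.tsum_add_tsum_compl (s := {w}) (f := c.K y) ENNReal.summable
  rw [tsum_singleton, c.K_row] at hsplit
  refine le_antisymm (ENNReal.le_of_add_le_add_right ENNReal.one_ne_top ?_) zero_le
  calc c.K y w + 1 ≤ c.K y w + ∑' u : ({w}ᶜ : Set M), c.K y u := add_le_add le_rfl hrest
    _ = 0 + 1 := by rw [hsplit, zero_add]

lemma measure_coord_succ_eq_zero {z : M} (hz : ∀ y, c.K y z = 0) (x : M) (n : ℕ) :
    c.P x {ω | ω (n + 1) = z} = 0 := by
  have hcover : {ω | ω (n + 1) = z} ⊆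
      ⋃ v : {v : Fin (n + 2) → M // extendWord v (n + 1) = z}, cylinder (n + 1) (extendWord v.1) :=
    fun ω hω => Set.mem_iUnion.mpr ⟨⟨fun j => ω j, (extendWord_restrict ω le_rfl).trans hω⟩,
      fun i hi => (extendWord_restrict ω hi).symm⟩
  refine measure_mono_null hcover (measure_iUnion_null fun v => ?_)
  rw [cylinder, c.markov, v.2, hz, mul_zero]

lemma mem_measurableAtom_of_measure_pos {x z : M} (h : 0 < c.P x {ω | ω 0 = z}) :
    z ∈ measurableAtom x := by
  by_contra hz
  exact h.ne' <| measure_mono_null (fun ω (hω : ω 0 = z) hmem => hz (hω ▸ hmem))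
    (c.measure_compl_start_measurableAtom x)

/-- If `z' ≠ z` shared a measurable atom, no state could jump to `z`, so `z` could only be
reached at time `0`; this forces every state into the atom of `z`, and then the kernel would
vanish identically. -/
theorem measurableSingletonClass_of_irreducible (hirr : Irreducible c) :
    MeasurableSingletonClass M := by
  refine ⟨fun z => ?_⟩
  suffices measurableAtom z = {z} from this ▸ MeasurableSet.measurableAtom_of_countable z
  refine Set.Subset.antisymm (fun z' hz' => ?_) (by simp)
  by_contra hne
  have hKz := c.kernel_eq_zero_of_mem_measurableAtom hne hz'
  have hmem : ∀ x, z ∈ measurableAtom x := fun x => by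
    obtain ⟨n, hn⟩ := hirr x z
    rcases n with _ | n
    · exact c.mem_measurableAtom_of_measure_pos hn
    · exact absurd (c.measure_coord_succ_eq_zero hKz x n) hn.ne'
  have hK : ∀ x, c.K z x = 0 := fun x => by
    by_cases hx : z = x
    · exact hx ▸ hKz z
    · exact c.kernel_eq_zero_of_mem_measurableAtom hx (hmem x) z
  simpa [hK] using c.K_row z

end Chain

section Markov

lemma measurable_hitTime {A : Set M} (hA : MeasurableSet A) : Measurable (hitTime A) := by
  classical
  refine Measurable.iInf fun n => ?_
  simp only [Set.mem_ofPred_eq, iInf_eq_if]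
  exact Measurable.ite (measurable_pi_apply n hA) measurable_const measurable_const

variable [MeasurableSingletonClass M]

lemma measurableSet_cylinder (n : ℕ) (p : ℕ → M) : MeasurableSet (cylinder n p) := by
  unfold cylinder; measurability

lemma measurableSet_avoids (s : M) (m k : ℕ) : MeasurableSet (avoids s m k) := by
  unfold avoids; measurability

lemma measurable_coverTime {A : Set M} (hA : A.Countable) : Measurable (coverTime A) :=
  Measurable.biSup A hA fun x _ => measurable_hitTime (measurableSet_singleton x)

namespace Chain

variable (c : Chain M)

lemma measure_start_inter (x : M) (E : Set (ℕ → M)) :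
    c.P x ({ω | ω 0 = x} ∩ E) = c.P x E := by
  have := c.prob x
  have hmeas : MeasurableSet {ω : ℕ → M | ω 0 = x} := by measurability
  have hnull := (prob_compl_eq_zero_iff hmeas).mpr (c.start x)
  rw [Set.inter_comm, measure_inter_conull hnull]

variable [Countable M] {s : M}

lemma measure_cylinder_inter_avoids_succ {k : ℕ}
    (ih : ∀ x m p, p m ≠ s →
      c.P x (cylinder m p ∩ avoids s m k) = c.P x (cylinder m p) * c.P (p m) (avoids s 0 k))
    (x : M) {m : ℕ} {p : ℕ → M} (hpm : p m ≠ s) :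
    c.P x (cylinder m p ∩ avoids s m (k + 1)) =
      c.P x (cylinder m p) * ∑' z : ({s}ᶜ : Set M), c.K (p m) z * c.P z (avoids s 0 k) := by
  rw [cylinder_inter_avoids_succ hpm, measure_iUnion]
  · rw [← ENNReal.tsum_mul_left]
    refine tsum_congr fun z => ?_
    rw [ih x (m + 1) _ (by rw [Function.update_self]; exact z.2), Function.update_self,
      measure_cylinder_update, mul_assoc]
  · exact fun z z' hne => (pairwise_disjoint_cylinder_update m p (Subtype.coe_ne_coe.mpr hne)).mono
      Set.inter_subset_left Set.inter_subset_left
  · exact fun z => (measurableSet_cylinder _ _).inter (measurableSet_avoids _ _ _)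

theorem measure_cylinder_inter_avoids (k : ℕ) (x : M) {m : ℕ} {p : ℕ → M} (hpm : p m ≠ s) :
    c.P x (cylinder m p ∩ avoids s m k) = c.P x (cylinder m p) * c.P (p m) (avoids s 0 k) := by
  induction k generalizing x m p with
  | zero =>
    have hcyl : cylinder m p ∩ avoids s m 0 = cylinder m p :=
      Set.inter_eq_left.mpr fun ω hω i hi => by
        obtain rfl := Nat.le_zero.mp hi
        simpa [hω m le_rfl] using hpm
    have havoid : c.P (p m) (avoids s 0 0) = 1 := by
      have := c.prob (p m)
      refine le_antisymm prob_le_one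
        (c.start (p m) ▸ measure_mono fun ω (hω : ω 0 = p m) i hi => ?_)
      obtain rfl := Nat.le_zero.mp hi
      simpa [hω] using hpm
    rw [hcyl, havoid, mul_one]
  | succ k ih =>
    -- the same recursion, read at time `0` from `p m`, computes `P_{p m}(avoids s 0 (k + 1))`
    have hstart : cylinder 0 (fun _ => p m) = {ω | ω 0 = p m} := by ext; simp [cylinder]
    have hrec := c.measure_cylinder_inter_avoids_succ ih (p m) (m := 0) (p := fun _ => p m) hpm
    rw [hstart, c.measure_start_inter, c.start, one_mul] at hrec
    rw [c.measure_cylinder_inter_avoids_succ ih x hpm, hrec]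

theorem measure_inter_avoids_of_dependsOn {m : ℕ} {B : Set (ℕ → M)}
    (hB : DependsOn (· ∈ B) (Set.Iic m)) {z : M} (hBz : B ⊆ {ω | ω m = z}) (hz : z ≠ s)
    (x : M) (k : ℕ) :
    c.P x (B ∩ avoids s m k) = c.P x B * c.P z (avoids s 0 k) := by
  have hdisj := pairwise_disjoint_cylinder_extendWord (M := M) m
  have hend (v : {v : Fin (m + 1) → M // extendWord v ∈ B}) : extendWord v.1 m = z := hBz v.2
  rw [eq_iUnion_cylinder_of_dependsOn hB, Set.iUnion_inter, measure_iUnion, measure_iUnion,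
    ← ENNReal.tsum_mul_right]
  · refine tsum_congr fun v => ?_
    rw [c.measure_cylinder_inter_avoids k x (hend v ▸ hz), hend v]
  · exact fun v v' hne => hdisj (Subtype.coe_ne_coe.mpr hne)
  · exact fun v => measurableSet_cylinder _ _
  · exact fun v v' hne => (hdisj (Subtype.coe_ne_coe.mpr hne)).mono
      Set.inter_subset_left Set.inter_subset_left
  · exact fun v => (measurableSet_cylinder _ _).inter (measurableSet_avoids _ _ _)

end Chain

end Markov

namespace Chain

variable [MeasurableSingletonClass M] (c : Chain M)

lemma eHit_eq_tsum (z s : M) : eHit c z s = ∑' k : ℕ, c.P z (avoids s 0 k) := by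
  rw [eHit, E, lintegral_eq_tsum_measure_natCast_lt _
    (measurable_hitTime (measurableSet_singleton s)) (exists_hitTime_eq {s})]
  simp only [natCast_lt_hitTime_singleton_iff, Set.ofPred_mem_eq]

variable [Countable M]

lemma expect_coverTime_eq_tsum (A : Set M) (x : M) :
    E c x (coverTime A) = ∑' k : ℕ, c.P x {ω | (k : ℝ≥0∞) < coverTime A ω} :=
  lintegral_eq_tsum_measure_natCast_lt _ (measurable_coverTime A.to_countable)
    (exists_coverTime_eq A)

variable {B : Set M} {s : M} {t : ℝ≥0∞}

/-- The strong Markov property at the cover time `m` of `B`: from then on, the time still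
needed to reach `s` has mean at most `t`. -/
lemma tsum_measure_coverTime_eq_add_lt_hitTime_le (hB : B.Finite) (hBne : B.Nonempty)
    (hs : s ∉ B) (ht : ∀ z ∈ B, eHit c z s ≤ t) (x : M) (m : ℕ) :
    ∑' j : ℕ, c.P x {ω | coverTime B ω = m ∧ ((m + j : ℕ) : ℝ≥0∞) < hitTime {s} ω}
      ≤ t * c.P x {ω | coverTime B ω = m ∧ (m : ℝ≥0∞) < hitTime {s} ω} := by
  set Em := {ω | coverTime B ω = m ∧ (m : ℝ≥0∞) < hitTime {s} ω}
  set Ez : B → Set (ℕ → M) := fun z => Em ∩ {ω | ω m = z}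
  have hEm : Em = ⋃ z : B, Ez z := eq_iUnion_inter_coord_eq hB hBne fun ω hω => hω.1
  have hEz_meas (z : B) : MeasurableSet (Ez z) :=
    ((measurableSet_eq_fun (measurable_coverTime hB.countable) measurable_const).inter
      (measurableSet_lt measurable_const (measurable_hitTime (measurableSet_singleton s)))).inter
        (measurableSet_eq_fun (measurable_pi_apply m) measurable_const)
  have hdisj : Pairwise fun z z' : B => Disjoint (Ez z) (Ez z') :=
    fun z z' hne => Set.disjoint_left.mpr fun ω h h' => hne (Subtype.ext (h.2.symm.trans h'.2))
  have hmarkov (z : B) (j : ℕ) :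
      c.P x (Ez z ∩ avoids s m j) = c.P x (Ez z) * c.P z (avoids s 0 j) :=
    c.measure_inter_avoids_of_dependsOn (s := s)
      (dependsOn_coverTime_eq_lt_hitTime_coord_eq B s z m) Set.inter_subset_right
      (fun h => hs (h ▸ z.2)) x j
  calc ∑' j : ℕ, c.P x {ω | coverTime B ω = m ∧ ((m + j : ℕ) : ℝ≥0∞) < hitTime {s} ω}
      = ∑' j : ℕ, ∑' z : B, c.P x (Ez z ∩ avoids s m j) := by
        refine tsum_congr fun j => ?_
        rw [setOf_coverTime_eq_and_natCast_add_lt_hitTime]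
        change c.P x (Em ∩ _) = _
        rw [hEm, Set.iUnion_inter]
        refine measure_iUnion (fun z z' hne => ?_) fun z =>
          (hEz_meas z).inter (measurableSet_avoids s m j)
        exact (hdisj hne).mono Set.inter_subset_left Set.inter_subset_left
    _ = ∑' z : B, c.P x (Ez z) * eHit c z s := by
        rw [ENNReal.tsum_comm]
        refine tsum_congr fun z => ?_
        rw [eHit_eq_tsum, ← ENNReal.tsum_mul_left]
        exact tsum_congr fun j => hmarkov z j
    _ ≤ ∑' z : B, c.P x (Ez z) * t := ENNReal.tsum_le_tsum fun z => by gcongr; exact ht z z.2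
    _ = t * c.P x Em := by
        rw [ENNReal.tsum_mul_right, mul_comm, hEm, measure_iUnion hdisj hEz_meas]

lemma tsum_measure_coverTime_le_lt_hitTime_le (hB : B.Finite) (hBne : B.Nonempty)
    (hs : s ∉ B) (ht : ∀ z ∈ B, eHit c z s ≤ t) (x : M) :
    ∑' k : ℕ, c.P x {ω | coverTime B ω ≤ k ∧ (k : ℝ≥0∞) < hitTime {s} ω}
      ≤ t * c.P x {ω | coverTime B ω < hitTime {s} ω} := by
  have hcov := measurable_coverTime hB.countable
  have hhit := measurable_hitTime (measurableSet_singleton s)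
  have hsplit (S : Set (ℕ → M)) (hS : MeasurableSet S) (hfin : ∀ ω ∈ S, coverTime B ω ≠ ⊤) :=
    measure_eq_tsum_measure_inter_eq_natCast (c.P x) hcov (exists_coverTime_eq B) hS hfin
  calc ∑' k : ℕ, c.P x {ω | coverTime B ω ≤ k ∧ (k : ℝ≥0∞) < hitTime {s} ω}
      = ∑' m : ℕ, ∑' j : ℕ,
          c.P x {ω | coverTime B ω = m ∧ ((m + j : ℕ) : ℝ≥0∞) < hitTime {s} ω} := by
        simp_rw [← tsum_measure_le_lt_inter_eq (c.P x)]
        rw [ENNReal.tsum_comm]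
        refine tsum_congr fun k => hsplit _ ?_ fun ω h => ne_top_of_le_ne_top (by simp) h.1
        exact (measurableSet_le hcov measurable_const).inter
          (measurableSet_lt measurable_const hhit)
    _ ≤ ∑' m : ℕ, t * c.P x {ω | coverTime B ω = m ∧ (m : ℝ≥0∞) < hitTime {s} ω} :=
        ENNReal.tsum_le_tsum fun m =>
          c.tsum_measure_coverTime_eq_add_lt_hitTime_le hB hBne hs ht x m
    _ = t * c.P x {ω | coverTime B ω < hitTime {s} ω} := by
        rw [ENNReal.tsum_mul_left, hsplit _ (measurableSet_lt hcov hhit)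
          fun ω h => h.ne_top]
        congr 1
        refine tsum_congr fun m => congrArg _ (Set.ext fun ω => ?_)
        simp only [Set.mem_inter_iff, Set.mem_ofPred_eq]
        exact ⟨fun ⟨hm, hlt⟩ => ⟨hm ▸ hlt, hm⟩, fun ⟨hlt, hm⟩ => ⟨hm, hm ▸ hlt⟩⟩

/-- Covering `insert s B` costs the cover time of `B`, plus the time to reach `s` afterwards
on the event that `s` is the last point of `insert s B` to be visited. -/
lemma expect_coverTime_insert_le (hB : B.Finite) (hBne : B.Nonempty) (hs : s ∉ B)
    (ht : ∀ z ∈ B, eHit c z s ≤ t) (x : M) :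
    E c x (coverTime (insert s B)) ≤
      E c x (coverTime B) + t * c.P x {ω | coverTime B ω < hitTime {s} ω} := by
  have hsplit (k : ℕ) : c.P x {ω | (k : ℝ≥0∞) < coverTime (insert s B) ω} =
      c.P x {ω | (k : ℝ≥0∞) < coverTime B ω} +
        c.P x {ω | coverTime B ω ≤ k ∧ (k : ℝ≥0∞) < hitTime {s} ω} := by
    have hunion : {ω | (k : ℝ≥0∞) < coverTime (insert s B) ω} =
        {ω | (k : ℝ≥0∞) < coverTime B ω} ∪
          {ω | coverTime B ω ≤ k ∧ (k : ℝ≥0∞) < hitTime {s} ω} := by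
      ext ω
      simp only [coverTime_insert, lt_sup_iff, Set.mem_union, Set.mem_ofPred_eq]
      rcases lt_or_ge (k : ℝ≥0∞) (coverTime B ω) with h | h <;> simp [h, not_lt.mpr, or_comm]
    rw [hunion, measure_union]
    · exact Set.disjoint_left.mpr fun ω h h' => (not_lt.mpr h'.1) h
    · exact (measurableSet_le (measurable_coverTime hB.countable) measurable_const).inter
        (measurableSet_lt measurable_const (measurable_hitTime (measurableSet_singleton s)))
  rw [c.expect_coverTime_eq_tsum, c.expect_coverTime_eq_tsum, tsum_congr hsplit, ENNReal.tsum_add]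
  gcongr
  exact c.tsum_measure_coverTime_le_lt_hitTime_le hB hBne hs ht x

/-- Matthews' averaging step: the events "`s` is the last point of `F` to be visited" are
disjoint as `s` ranges over `F`. -/
lemma card_mul_expect_coverTime_le [DecidableEq M] {F : Finset M} (hF : 2 ≤ F.card)
    (ht : ∀ z ∈ F, ∀ u ∈ F, eHit c z u ≤ t) (x : M) :
    (F.card : ℝ≥0∞) * E c x (coverTime F) ≤ ∑ s ∈ F, E c x (coverTime (F.erase s : Set M)) + t := by
  set last : M → Set (ℕ → M) := fun s => {ω | coverTime (F.erase s : Set M) ω < hitTime {s} ω}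
  have hstep (s : M) (hs : s ∈ F) :
      E c x (coverTime F) ≤ E c x (coverTime (F.erase s : Set M)) + t * c.P x (last s) := by
    have hinsert : (F : Set M) = insert s (F.erase s : Set M) := by
      rw [← Finset.coe_insert, Finset.insert_erase hs]
    have hne : (F.erase s).Nonempty := by
      rw [← Finset.card_pos, Finset.card_erase_of_mem hs]; omega
    rw [hinsert]
    exact c.expect_coverTime_insert_le (F.erase s).finite_toSet hne (by simp)
      (fun z hz => ht z (Finset.mem_of_mem_erase hz) s hs) x
  have hlast : ∑ s ∈ F, c.P x (last s) ≤ 1 := by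
    have := c.prob x
    rw [← measure_biUnion_finset]
    · exact prob_le_one
    · exact fun s hs s' hs' hne => disjoint_coverTime_lt_hitTime
        (Finset.mem_coe.mpr (Finset.mem_erase.mpr ⟨hne.symm, hs'⟩))
        (Finset.mem_coe.mpr (Finset.mem_erase.mpr ⟨hne, hs⟩))
    · exact fun s _ => measurableSet_lt (measurable_coverTime (Finset.countable_toSet _))
        (measurable_hitTime (measurableSet_singleton s))
  calc (F.card : ℝ≥0∞) * E c x (coverTime F) = ∑ _s ∈ F, E c x (coverTime F) := by
        rw [Finset.sum_const, nsmul_eq_mul]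
    _ ≤ ∑ s ∈ F, (E c x (coverTime (F.erase s : Set M)) + t * c.P x (last s)) :=
        Finset.sum_le_sum hstep
    _ = ∑ s ∈ F, E c x (coverTime (F.erase s : Set M)) + t * ∑ s ∈ F, c.P x (last s) := by
        rw [Finset.sum_add_distrib, Finset.mul_sum]
    _ ≤ ∑ s ∈ F, E c x (coverTime (F.erase s : Set M)) + t := by
        gcongr
        exact mul_le_of_le_one_right zero_le hlast

theorem expect_coverTime_le_harmonic_mul (F : Finset M) {x : M}
    (hx : ∀ u ∈ F, eHit c x u ≤ t) (ht : ∀ z ∈ F, ∀ u ∈ F, eHit c z u ≤ t) :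
    E c x (coverTime F) ≤ ENNReal.ofReal (harmonic F.card) * t := by
  classical
  obtain ⟨n, hn⟩ : ∃ n, F.card = n := ⟨_, rfl⟩
  induction n generalizing F with
  | zero =>
    obtain rfl := Finset.card_eq_zero.mp hn
    simp [coverTime, E]
  | succ n ih =>
    rcases n with _ | n
    · obtain ⟨s, rfl⟩ := Finset.card_eq_one.mp hn
      simpa [coverTime, E, eHit] using hx s (by simp)
    · have herase (s : M) (hs : s ∈ F) :
          E c x (coverTime (F.erase s : Set M)) ≤ ENNReal.ofReal (harmonic (n + 1)) * t := by
        have hcard : (F.erase s).card = n + 1 := by rw [Finset.card_erase_of_mem hs, hn]; rfl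
        have := ih (F.erase s) (fun u hu => hx u (Finset.mem_of_mem_erase hu))
          (fun z hz u hu => ht z (Finset.mem_of_mem_erase hz) u (Finset.mem_of_mem_erase hu)) hcard
        rwa [hcard] at this
      rw [hn]
      refine le_ofReal_harmonic_succ_mul ?_
      rw [← hn]
      calc (F.card : ℝ≥0∞) * E c x (coverTime F)
          ≤ ∑ s ∈ F, E c x (coverTime (F.erase s : Set M)) + t :=
            c.card_mul_expect_coverTime_le (by omega) ht x
        _ ≤ ∑ _s ∈ F, ENNReal.ofReal (harmonic (n + 1)) * t + t := by
            gcongr with s hs; exact herase s hs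
        _ = F.card * (ENNReal.ofReal (harmonic (n + 1)) * t) + t := by
            rw [Finset.sum_const, nsmul_eq_mul]

end Chain

theorem matthews_upper_bound_general {M : Type*} [Countable M] [MeasurableSpace M]
    (c : Chain M) (hirr : Irreducible c)
    {A : Set M} (hA : A.Finite) :
    cov c A ≤ ENNReal.ofReal (1 + Real.log A.ncard) * ⨆ x ∈ A, ⨆ y ∈ A, eHit c x y := by
  have := c.measurableSingletonClass_of_irreducible hirr
  refine iSup₂_le fun x hx => ?_
  have ht : ∀ z ∈ A, ∀ u ∈ hA.toFinset, eHit c z u ≤ ⨆ x ∈ A, ⨆ y ∈ A, eHit c x y :=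
    fun z hz u hu => le_iSup₂_of_le z hz <|
      le_iSup₂_of_le (f := fun y _ => eHit c z y) u (hA.mem_toFinset.mp hu) le_rfl
  calc E c x (coverTime A) = E c x (coverTime hA.toFinset) := by rw [hA.coe_toFinset]
    _ ≤ ENNReal.ofReal (harmonic hA.toFinset.card) * ⨆ x ∈ A, ⨆ y ∈ A, eHit c x y :=
        c.expect_coverTime_le_harmonic_mul _ (ht x hx) fun z hz => ht z (hA.mem_toFinset.mp hz)
    _ ≤ ENNReal.ofReal (1 + Real.log A.ncard) * ⨆ x ∈ A, ⨆ y ∈ A, eHit c x y := by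
        rw [Set.ncard_eq_toFinset_card A hA]
        gcongr
        exact harmonic_le_one_add_log _

/-- Matthews' upper bound. For every finite subset `A` of `M`,
`cov(A) ≤ (1 + log |A|) · max_{x,y ∈ A} E_x T(y)`. -/
theorem matthews_upper_bound {M : Type*} [Countable M] [MeasurableSpace M]
    (c : Chain M) (hirr : Irreducible c) (hpos : PositiveRecurrent c)
    {A : Set M} (hA : A.Finite) (hAne : A.Nonempty) :
    cov c A ≤ ENNReal.ofReal (1 + Real.log A.ncard) * ⨆ x ∈ A, ⨆ y ∈ A, eHit c x y :=
  matthews_upper_bound_general c hirr hA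

end

end CoverTime
end

section
/- Let G = (V, E) be a directed graph on a finite vertex set. If every directed path of G has length at most m (i.e., every sequence of vertices x_1, …, x_k with (x_i, x_{i+1}) ∈ E for all i < k satisfies k ≤ m), then G has an independent set of cardinality at least |V|/m, where an independent set is a subset A of V with (x,y) ∉ E for all x, y ∈ A. -/
open MeasureTheory ENNReal NNReal

namespace CoverTime

noncomputable section

variable {M : Type*}

variable [MeasurableSpace M]

/-- If every directed path of a directed graph on the finite vertex set
`V` has length at most `m`, then the graph has an independent set of cardinality at least
`|V| / m`. -/
theorem independent_set_of_bounded_paths {V : Type*} [Fintype V]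
    (Edge : V → V → Prop) (m : ℕ)
    (hpath : ∀ (x : ℕ → V) (k : ℕ), (∀ i, i + 1 < k → Edge (x i) (x (i + 1))) → k ≤ m) :
    ∃ A : Finset V, (∀ x ∈ A, ∀ y ∈ A, ¬ Edge x y) ∧ Fintype.card V ≤ m * A.card := by
  classical
  rcases isEmpty_or_nonempty V with hV | hV
  · exact ⟨∅, by simp, by simp [Fintype.card_eq_zero]⟩
  -- longest path starting at v
  set P : V → ℕ → Prop := fun v k =>
    ∃ x : ℕ → V, x 0 = v ∧ ∀ i, i + 1 < k → Edge (x i) (x (i + 1)) with hP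
  have hP1 : ∀ v, P v 1 := fun v => ⟨fun _ => v, rfl, fun i hi => by omega⟩
  have hm1 : 1 ≤ m := hpath (fun _ => Classical.arbitrary V) 1 (fun i hi => by omega)
  set f : V → ℕ := fun v => Nat.findGreatest (P v) m with hf
  have hfm : ∀ v, f v ≤ m := fun v => Nat.findGreatest_le m
  have hf1 : ∀ v, 1 ≤ f v := fun v => Nat.le_findGreatest hm1 (hP1 v)
  have hfspec : ∀ v, P v (f v) := fun v =>
    Nat.findGreatest_spec hm1 (hP1 v)
  -- key monotonicity: Edge v w → f w < f v
  have hkey : ∀ v w, Edge v w → f w < f v := by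
    intro v w hvw
    obtain ⟨x, hx0, hxE⟩ := hfspec w
    set x' : ℕ → V := fun i => if i = 0 then v else x (i - 1) with hx'
    have hx'E : ∀ i, i + 1 < f w + 1 → Edge (x' i) (x' (i + 1)) := by
      intro i hi
      rcases Nat.eq_zero_or_pos i with h0 | h0
      · subst h0
        simpa [hx', hx0] using hvw
      · have : Edge (x (i - 1)) (x (i - 1 + 1)) := hxE (i - 1) (by omega)
        have hi1 : i - 1 + 1 = i := by omega
        rw [hi1] at this
        have hi0 : i ≠ 0 := by omega
        simpa [hx', hi0] using this
    have hle : f w + 1 ≤ m := hpath x' (f w + 1) hx'E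
    have : f w + 1 ≤ f v := Nat.le_findGreatest hle ⟨x', by simp [hx'], hx'E⟩
    omega
  -- pigeonhole on levels
  obtain ⟨j, hj, hjmax⟩ := (Finset.Icc 1 m).exists_max_image
    (fun j => (Finset.univ.filter (fun v => f v = j)).card)
    ⟨1, Finset.mem_Icc.mpr ⟨le_refl 1, hm1⟩⟩
  refine ⟨Finset.univ.filter (fun v => f v = j), ?_, ?_⟩
  · intro a ha b hb hab
    simp only [Finset.mem_filter] at ha hb
    have := hkey a b hab
    omega
  · have hsum : Fintype.card V
        = ∑ k ∈ Finset.Icc 1 m, (Finset.univ.filter (fun v => f v = k)).card := by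
      rw [← Finset.card_univ]
      exact Finset.card_eq_sum_card_fiberwise
        (fun v _ => Finset.mem_Icc.mpr ⟨hf1 v, hfm v⟩)
    rw [hsum]
    calc ∑ k ∈ Finset.Icc 1 m, (Finset.univ.filter (fun v => f v = k)).card
        ≤ (Finset.Icc 1 m).card * (Finset.univ.filter (fun v => f v = j)).card :=
          Finset.sum_le_card_nsmul _ _ _ (fun k hk => hjmax k hk)
      _ = m * (Finset.univ.filter (fun v => f v = j)).card := by
          rw [Nat.card_Icc, Nat.add_sub_cancel]

end

end CoverTime
end

section
/- There is a universal constant C such that for every finite metric space (M, d) with |M| ≥ 3, one has γ₁(M, d) ≤ [γ₂(M, √d)]² ≤ C · log(log|M|) · γ₁(M, d), where √d denotes the metric (x,y) ↦ √(d(x,y)). -/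
/-!
Since `Δ(B, √d)² = Δ(B, d)`, each term `2ⁿ Δ(Aₙ(x), d)` of `γ₁` is the square of the
corresponding term `2^{n/2} Δ(Aₙ(x), √d)` of `γ₂`, and a sum of squares is at most the square of
the sum; this is the lower bound. For the upper bound, cut an admissible sequence into singletons
from the first level `m` with `|M| ≤ Nₘ` on: this keeps it admissible, so each `γ₂`-sum has at
most `m` nonzero terms and Cauchy–Schwarz loses only a factor `m ≈ log₂ log₂ |M|`.
-/

open MeasureTheory ENNReal NNReal

namespace ENNReal

theorem tsum_sq_le_sq_tsum {ι : Type*} (f : ι → ℝ≥0∞) : ∑' i, f i ^ 2 ≤ (∑' i, f i) ^ 2 :=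
  calc ∑' i, f i ^ 2 ≤ ∑' i, f i * ∑' j, f j :=
        ENNReal.tsum_le_tsum fun i => by rw [sq]; gcongr; exact ENNReal.le_tsum i
    _ = (∑' i, f i) ^ 2 := by rw [ENNReal.tsum_mul_right, sq]

theorem sq_sum_le_card_mul_sum_sq {ι : Type*} (s : Finset ι) (f : ι → ℝ≥0∞) :
    (∑ i ∈ s, f i) ^ 2 ≤ s.card * ∑ i ∈ s, f i ^ 2 := by
  have := ENNReal.rpow_sum_le_const_mul_sum_rpow s f (p := 2) one_le_two
  norm_num [ENNReal.rpow_two] at this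
  exact this

theorem two_rpow_half_sq (n : ℕ) : ((2 : ℝ≥0∞) ^ ((n : ℝ) / 2)) ^ 2 = 2 ^ n := by
  rw [← ENNReal.rpow_natCast _ 2, ← ENNReal.rpow_mul, ← ENNReal.rpow_natCast 2 n]
  norm_num

theorem iInf_pow_of_ne_zero {ι : Sort*} {n : ℕ} (hn : n ≠ 0) (f : ι → ℝ≥0∞) :
    (⨅ i, f i) ^ n = ⨅ i, f i ^ n :=
  (powOrderIso n hn).map_iInf f

end ENNReal

-- Taking logarithms twice gives `k log 2 + log log 2 < log log N`; the constant `20` also absorbs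
-- `log log 2 < 0`, using `log log N ≥ log log 3 > 0.08`.
theorem Real.add_one_le_log_log_of_two_pow_two_pow_lt {k N : ℕ} (hN : 3 ≤ N)
    (hk : 2 ^ 2 ^ k < N) : (k + 1 : ℝ) ≤ 20 * Real.log (Real.log N) := by
  have hlog2 := Real.log_two_gt_d9
  have hlog3 := Real.log_three_gt_d9
  have hN' : (3 : ℝ) ≤ N := by exact_mod_cast hN
  have hlogN : 2 ^ k * Real.log 2 < Real.log N := by
    have : ((2 ^ 2 ^ k : ℕ) : ℝ) < N := by exact_mod_cast hk
    calc 2 ^ k * Real.log 2 = Real.log ((2 ^ 2 ^ k : ℕ) : ℝ) := by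
          rw [Nat.cast_pow, Real.log_pow]; push_cast; ring
      _ < Real.log N := Real.log_lt_log (by positivity) this
  have hloglogN : k * Real.log 2 + Real.log (Real.log 2) < Real.log (Real.log N) := by
    calc k * Real.log 2 + Real.log (Real.log 2) = Real.log (2 ^ k * Real.log 2) := by
          rw [Real.log_mul (by positivity) (by positivity), Real.log_pow]
      _ < Real.log (Real.log N) := Real.log_lt_log (by positivity) hlogN
  have hloglog2 : 1 - (Real.log 2)⁻¹ ≤ Real.log (Real.log 2) :=
    Real.one_sub_inv_le_log_of_pos (by positivity)
  have hloglog3 : 1 - (Real.log 3)⁻¹ ≤ Real.log (Real.log N) :=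
    (Real.one_sub_inv_le_log_of_pos (by positivity)).trans
      (Real.log_le_log (by positivity) (Real.log_le_log (by norm_num) hN'))
  have hinv2 : (Real.log 2)⁻¹ < 1.443 := by
    rw [inv_lt_comm₀ (by positivity) (by norm_num)]; norm_num at hlog2 ⊢; linarith
  have hinv3 : (Real.log 3)⁻¹ < 0.911 := by
    rw [inv_lt_comm₀ (by positivity) (by norm_num)]; norm_num at hlog3 ⊢; linarith
  have hk0 : (0 : ℝ) ≤ k := k.cast_nonneg
  nlinarith

namespace CoverTime

theorem Nseq_mono : Monotone Nseq := by
  refine monotone_nat_of_le_succ fun n => ?_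
  cases n with
  | zero => simp [Nseq]
  | succ k => exact Nat.pow_le_pow_right two_pos (Nat.pow_le_pow_right two_pos k.succ.le_succ)

theorem one_le_Nseq (n : ℕ) : 1 ≤ Nseq n := Nseq_mono n.zero_le

theorem exists_le_Nseq_and_le_log_log {N : ℕ} (hN : 3 ≤ N) :
    ∃ m, N ≤ Nseq m ∧ (m : ℝ) ≤ 20 * Real.log (Real.log N) := by
  have hlog : 1 < Nat.clog 2 N := (Nat.lt_clog_iff_pow_lt one_lt_two).2 (by omega)
  obtain ⟨k, hk⟩ : ∃ k, Nat.clog 2 (Nat.clog 2 N) = k + 1 :=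
    Nat.exists_eq_add_one.2 (Nat.clog_pos one_lt_two hlog)
  refine ⟨k + 1, ?_, ?_⟩
  · calc N ≤ 2 ^ Nat.clog 2 N := Nat.le_pow_clog one_lt_two N
      _ ≤ 2 ^ 2 ^ (k + 1) :=
        Nat.pow_le_pow_right two_pos (hk ▸ Nat.le_pow_clog one_lt_two _)
  · have hk' : 2 ^ 2 ^ k < N := by
      rw [← Nat.lt_clog_iff_pow_lt one_lt_two, ← Nat.lt_clog_iff_pow_lt one_lt_two, hk]
      exact k.lt_succ_self
    exact_mod_cast Real.add_one_le_log_log_of_two_pow_two_pow_lt hN hk'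

section Partitions

variable {M : Type*}

theorem setOf_exists_eq_singleton (A : Set M) :
    {B : Set M | ∃ x ∈ A, B = {x}} = (fun x => {x}) '' A := by
  ext B; simp [eq_comm]

namespace AdmissibleSeq

def indiscrete (A : Set M) : AdmissibleSeq A where
  cell _ _ := A
  self_mem _ _ hx := hx
  cell_subset _ _ _ := subset_rfl
  compatible _ _ _ _ _ := Or.inl rfl
  refines _ _ _ := subset_rfl
  finite _ := (Set.finite_singleton A).subset (by rintro B ⟨-, -, rfl⟩; rfl)
  card_le n := calc
    _ ≤ ({A} : Set (Set M)).ncard :=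
      Set.ncard_le_ncard (by rintro B ⟨-, -, rfl⟩; rfl) (Set.finite_singleton A)
    _ = 1 := Set.ncard_singleton A
    _ ≤ Nseq n := one_le_Nseq n

instance (A : Set M) : Nonempty (AdmissibleSeq A) := ⟨indiscrete A⟩

def truncate {A : Set M} (𝒜 : AdmissibleSeq A) (m : ℕ) (hA : A.Finite)
    (hcard : A.ncard ≤ Nseq m) : AdmissibleSeq A where
  cell n x := if n < m then 𝒜.cell n x else {x}
  self_mem n x hx := by
    split_ifs
    · exact 𝒜.self_mem n x hx
    · rfl
  cell_subset n x hx := by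
    split_ifs
    · exact 𝒜.cell_subset n x hx
    · exact Set.singleton_subset_iff.2 hx
  compatible n x hx y hy := by
    split_ifs
    · exact 𝒜.compatible n x hx y hy
    · rcases eq_or_ne x y with rfl | hxy
      · exact Or.inl rfl
      · exact Or.inr (Set.disjoint_singleton.2 hxy)
  refines n x hx := by
    split_ifs
    · exact 𝒜.refines n x hx
    · omega
    · exact Set.singleton_subset_iff.2 (𝒜.self_mem n x hx)
    · rfl
  finite n := by
    split_ifs
    · exact 𝒜.finite n
    · simpa only [setOf_exists_eq_singleton] using hA.image _
  card_le n := by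
    split_ifs with h
    · exact 𝒜.card_le n
    · rw [setOf_exists_eq_singleton, Set.ncard_image_of_injective _ Set.singleton_injective]
      exact hcard.trans (Nseq_mono (not_lt.1 h))

variable {A : Set M} (𝒜 : AdmissibleSeq A) {m n : ℕ} (hA : A.Finite) (hcard : A.ncard ≤ Nseq m)

theorem truncate_cell_of_lt (h : n < m) (x : M) : (𝒜.truncate m hA hcard).cell n x = 𝒜.cell n x :=
  if_pos h

theorem truncate_cell_of_le (h : m ≤ n) (x : M) : (𝒜.truncate m hA hcard).cell n x = {x} :=
  if_neg (not_lt.2 h)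

end AdmissibleSeq

end Partitions

section Functionals

variable {M : Type*} {d ρ : M → M → ℝ≥0∞}

theorem setDiam_singleton (hρ : ∀ x, ρ x x = 0) (x : M) : setDiam ρ {x} = 0 := by
  simp [setDiam, hρ]

theorem setDiam_sq (hρ : ∀ x y, ρ x y ^ 2 = d x y) (B : Set M) :
    setDiam ρ B ^ 2 = setDiam d B := by
  simp only [setDiam, ENNReal.iSup₂_pow_of_ne_zero _ two_ne_zero, hρ]

theorem sq_two_rpow_half_mul_setDiam (hρ : ∀ x y, ρ x y ^ 2 = d x y) (n : ℕ) (B : Set M) :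
    ((2 : ℝ≥0∞) ^ ((n : ℝ) / 2) * setDiam ρ B) ^ 2 = 2 ^ n * setDiam d B := by
  rw [mul_pow, ENNReal.two_rpow_half_sq, setDiam_sq hρ]

theorem gamma1_le_sq_gamma2 (hρ : ∀ x y, ρ x y ^ 2 = d x y) (A : Set M) :
    gamma1 d A ≤ gamma2 ρ A ^ 2 := by
  rw [gamma2, ENNReal.iInf_pow_of_ne_zero two_ne_zero]
  refine iInf_mono fun 𝒜 => ?_
  rw [ENNReal.iSup₂_pow_of_ne_zero _ two_ne_zero]
  refine iSup₂_mono fun x _ => ?_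
  calc ∑' n, 2 ^ n * setDiam d (𝒜.cell n x)
      = ∑' n : ℕ, ((2 : ℝ≥0∞) ^ ((n : ℝ) / 2) * setDiam ρ (𝒜.cell n x)) ^ 2 := by
        simp only [sq_two_rpow_half_mul_setDiam hρ]
    _ ≤ _ := ENNReal.tsum_sq_le_sq_tsum _

theorem sq_gamma2_le_mul (hρ : ∀ x y, ρ x y ^ 2 = d x y) (hρ₀ : ∀ x, ρ x x = 0) {A : Set M}
    {m : ℕ} (hA : A.Finite) (hcard : A.ncard ≤ Nseq m) (𝒜 : AdmissibleSeq A) :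
    gamma2 ρ A ^ 2 ≤ m * ⨆ x ∈ A, ∑' n : ℕ, 2 ^ n * setDiam d (𝒜.cell n x) := by
  have hgamma2 : gamma2 ρ A ≤ ⨆ x ∈ A, ∑ n ∈ Finset.range m,
      (2 : ℝ≥0∞) ^ ((n : ℝ) / 2) * setDiam ρ (𝒜.cell n x) := by
    refine (iInf_le _ (𝒜.truncate m hA hcard)).trans_eq
      (iSup_congr fun x => iSup_congr fun _ => ?_)
    rw [tsum_eq_sum (s := Finset.range m) fun n hn => ?_]
    · exact Finset.sum_congr rfl fun n hn =>
        by rw [𝒜.truncate_cell_of_lt hA hcard (Finset.mem_range.1 hn)]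
    · rw [𝒜.truncate_cell_of_le hA hcard (by simpa using hn), setDiam_singleton hρ₀, mul_zero]
  calc gamma2 ρ A ^ 2
      ≤ ⨆ x ∈ A, (∑ n ∈ Finset.range m,
          (2 : ℝ≥0∞) ^ ((n : ℝ) / 2) * setDiam ρ (𝒜.cell n x)) ^ 2 := by
        rw [← ENNReal.iSup₂_pow_of_ne_zero _ two_ne_zero]
        exact pow_le_pow_left₀ bot_le hgamma2 2
    _ ≤ ⨆ x ∈ A, m * ∑ n ∈ Finset.range m, 2 ^ n * setDiam d (𝒜.cell n x) := by
        gcongr with x hx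
        simpa [sq_two_rpow_half_mul_setDiam hρ] using
          ENNReal.sq_sum_le_card_mul_sum_sq (Finset.range m) fun n =>
            (2 : ℝ≥0∞) ^ ((n : ℝ) / 2) * setDiam ρ (𝒜.cell n x)
    _ ≤ m * ⨆ x ∈ A, ∑' n : ℕ, 2 ^ n * setDiam d (𝒜.cell n x) :=
        iSup₂_le fun x hx => by
          gcongr
          exact (ENNReal.sum_le_tsum _).trans (le_iSup₂_of_le x hx le_rfl)

theorem sq_gamma2_le_mul_gamma1 (hρ : ∀ x y, ρ x y ^ 2 = d x y) (hρ₀ : ∀ x, ρ x x = 0)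
    {A : Set M} {m : ℕ} (hA : A.Finite) (hcard : A.ncard ≤ Nseq m) :
    gamma2 ρ A ^ 2 ≤ m * gamma1 d A := by
  rw [gamma1, ENNReal.mul_iInf fun h => absurd h (ENNReal.natCast_ne_top m)]
  exact le_iInf (sq_gamma2_le_mul hρ hρ₀ hA hcard)

end Functionals

/-- There is a universal constant `C` such that for every finite metric
space `(M, d)` with `|M| ≥ 3`,
`γ₁(M, d) ≤ [γ₂(M, √d)]² ≤ C log(log |M|) γ₁(M, d)`. -/
theorem gamma1_gamma2_comparison :
    ∃ C : ℝ≥0, ∀ (M : Type) [MetricSpace M] [Fintype M],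
      3 ≤ Fintype.card M →
      gamma1 (fun x y => ENNReal.ofReal (dist x y)) (Set.univ : Set M)
          ≤ (gamma2 (fun x y => ENNReal.ofReal (Real.sqrt (dist x y)))
              (Set.univ : Set M)) ^ 2 ∧
      (gamma2 (fun x y => ENNReal.ofReal (Real.sqrt (dist x y)))
          (Set.univ : Set M)) ^ 2
        ≤ (C : ℝ≥0∞) * ENNReal.ofReal (Real.log (Real.log (Fintype.card M)))
            * gamma1 (fun x y => ENNReal.ofReal (dist x y)) (Set.univ : Set M) := by
  refine ⟨20, fun M _ _ hM => ?_⟩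
  have hsqrt (x y : M) : ENNReal.ofReal (Real.sqrt (dist x y)) ^ 2 = ENNReal.ofReal (dist x y) := by
    rw [← ENNReal.ofReal_pow (Real.sqrt_nonneg _), Real.sq_sqrt dist_nonneg]
  refine ⟨gamma1_le_sq_gamma2 hsqrt _, ?_⟩
  obtain ⟨m, hcard, hm⟩ := exists_le_Nseq_and_le_log_log hM
  have hm_le : (m : ℝ≥0∞) ≤ (20 : ℝ≥0) * ENNReal.ofReal (Real.log (Real.log (Fintype.card M))) := by
    rw [ENNReal.coe_ofNat, ← ENNReal.ofReal_natCast, ← ENNReal.ofReal_ofNat,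
      ← ENNReal.ofReal_mul (by norm_num)]
    exact ENNReal.ofReal_le_ofReal hm
  calc _ ≤ m * gamma1 (fun x y => ENNReal.ofReal (dist x y)) (Set.univ : Set M) :=
        sq_gamma2_le_mul_gamma1 hsqrt (by simp) Set.finite_univ (by simpa using hcard)
    _ ≤ _ := by gcongr

end CoverTime
end
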